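/- Assume the boundary condition ω satisfies |∑_{y∈I} ω_y| ≤ δ|I| for every interval I ⊂ ∂_ex Λ(l) with |I| ≥ δl, where 0 < δ < 1. Let γ_1,…,γ_p be non-crossing (ε)-contours at σ, and let I be an interval in ∂_ex Λ(l) with ∪_j I(γ_j) ⊂ I and δl ≤ |I| ≤ ∑_j |γ̲_j| + c for some c ≥ 0. Then (1/2)Δ_{γ_1,…,γ_p} H^ω_{Λ(l)}(σ) ≥ ε₀ max{l, ∑_j |γ_j|} − c, for a constant ε₀ > 0 depending only on δ. -/

import Mathlib

open Finset

/-! ### Basic lattice notions for the 2-D Ising model on the square Λ(l) -/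

abbrev Site := ℤ × ℤ

/-- `l¹`-distance on `ℤ²`. -/
def d1 (x y : Site) : ℤ := |x.1 - y.1| + |x.2 - y.2|

/-- `l∞`-distance on `ℤ²`. -/
def dinf (x y : Site) : ℤ := max |x.1 - y.1| |x.2 - y.2|

/-- There is a path from `x` to `y` inside `S` with steps of `d`-distance 1. -/
def ChainIn (d : Site → Site → ℤ) (S : Set Site) (x y : Site) : Prop :=
  ∃ L : List Site, L.Chain' (fun a b => d a b = 1) ∧ L.head? = some x ∧
    L.getLast? = some y ∧ ∀ a ∈ L, a ∈ S

/-- `S` is connected with respect to steps of `d`-distance 1. -/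
def ConnIn (d : Site → Site → ℤ) (S : Set Site) : Prop :=
  ∀ x ∈ S, ∀ y ∈ S, ChainIn d S x y

def lamLo (l : ℕ) : ℤ := 1 - (((l + 1) / 2 : ℕ) : ℤ)
def lamHi (l : ℕ) : ℤ := ((l / 2 : ℕ) : ℤ)

/-- The lamBox the box. -/
noncomputable def lamBox (l : ℕ) : Finset Site := Finset.Icc (lamLo l, lamLo l) (lamHi l, lamHi l)

/-- The exterior boundary `∂_ex Λ(l)`. -/
def extBdry (l : ℕ) : Set Site := {y | y ∉ lamBox l ∧ ∃ x ∈ lamBox l, d1 x y = 1}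

/-- An interval of `∂_ex Λ(l)` : an `l∞`-connected subset of it. -/
def IsBdryInterval (l : ℕ) (I : Finset Site) : Prop :=
  (↑I : Set Site) ⊆ extBdry l ∧ ConnIn dinf ↑I

/-- The four nearest neighbours of a site. -/
def nbrs (x : Site) : Finset Site :=
  {(x.1 + 1, x.2), (x.1 - 1, x.2), (x.1, x.2 + 1), (x.1, x.2 - 1)}

/-- A dual bond, recorded by its two endpoints `v`, a dual vertex `v` standing for the
point `v + (1/2, 1/2)` of the dual lattice. -/
abbrev DBond := Sym2 Site

/-- The dual bond of the nearest-neighbour bond `{x, y}`. -/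
def dualBond (x y : Site) : DBond :=
  if x.2 = y.2 then s((min x.1 y.1, x.2 - 1), (min x.1 y.1, x.2))
  else s((x.1 - 1, min x.2 y.2), (x.1, min x.2 y.2))

/-- `∂Q(Θ)` : the set of dual bonds separating `Θ` from its complement. -/
def contourOf (Θ : Finset Site) : Finset DBond :=
  Θ.biUnion fun x => ((nbrs x).filter (· ∉ Θ)).image fun y => dualBond x y

/-- `Θ` and its complement are `l¹`-connected, so that `∂Q(Θ)` is a contour. -/
def IsContourRegion (Θ : Finset Site) : Prop :=
  ConnIn d1 ↑Θ ∧ ConnIn d1 ((↑Θ : Set Site)ᶜ)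

/-- `∂Q(Λ(l))`, as a set of dual bonds. -/
noncomputable def boxBdry (l : ℕ) : Finset DBond := contourOf (lamBox l)

/-- The dual vertex `v` lies on the side `F_l^j` of `Q(Λ(l))` (`j ∈ {1,-1,2,-2}` for
right, left, top, bottom). -/
def onSide (l : ℕ) (j : ℤ) (v : Site) : Prop :=
  (j = 1 ∧ v.1 = lamHi l ∧ lamLo l - 1 ≤ v.2 ∧ v.2 ≤ lamHi l) ∨
  (j = -1 ∧ v.1 = lamLo l - 1 ∧ lamLo l - 1 ≤ v.2 ∧ v.2 ≤ lamHi l) ∨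
  (j = 2 ∧ v.2 = lamHi l ∧ lamLo l - 1 ≤ v.1 ∧ v.1 ≤ lamHi l) ∨
  (j = -2 ∧ v.2 = lamLo l - 1 ∧ lamLo l - 1 ≤ v.1 ∧ v.1 ≤ lamHi l)

/-- The set of dual bonds `γ` meets the side `F_l^j`. -/
def touches (l : ℕ) (j : ℤ) (γ : Finset DBond) : Prop :=
  ∃ e ∈ γ, ∃ v : Site, v ∈ e ∧ onSide l j v

def HorizCrossing (l : ℕ) (γ : Finset DBond) : Prop := touches l 1 γ ∧ touches l (-1) γ
def VertCrossing (l : ℕ) (γ : Finset DBond) : Prop := touches l 2 γ ∧ touches l (-2) γ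

/-- `γ` is neither horizontally nor vertically crossing. -/
def NonCrossing (l : ℕ) (γ : Finset DBond) : Prop :=
  ¬ (HorizCrossing l γ ∨ VertCrossing l γ)

/-- Two dual bonds are adjacent if they share a dual vertex. -/
def DAdj (a b : DBond) : Prop := ∃ v : Site, v ∈ a ∧ v ∈ b

/-- A set of dual bonds is connected (via shared dual vertices). -/
def DConn (S : Finset DBond) : Prop :=
  ∀ e ∈ S, ∀ f ∈ S, ∃ L : List DBond, L.Chain' DAdj ∧ L.head? = some e ∧
    L.getLast? = some f ∧ ∀ a ∈ L, a ∈ S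

/-- Dual bonds separating `Θt` from `Λ(l) \ Θt` inside the lamBox. -/
noncomputable def interiorBdry (l : ℕ) (Θt : Finset Site) : Finset DBond :=
  Θt.biUnion fun x => ((nbrs x).filter fun y => y ∈ lamBox l ∧ y ∉ Θt).image fun y => dualBond x y

/-- The sites of `Λ(l)` along the side `F_l^j`. -/
def sideSites (l : ℕ) (j : ℤ) (x : Site) : Prop :=
  x ∈ lamBox l ∧ ((j = 1 ∧ x.1 = lamHi l) ∨ (j = -1 ∧ x.1 = lamLo l) ∨
    (j = 2 ∧ x.2 = lamHi l) ∨ (j = -2 ∧ x.2 = lamLo l))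

/-- The data of the distinguished connected component `γ̲ = γu` of `γ \ ∂Q(Λ(l))` and of the
region `Θ̃ = Θt` into which a non-crossing contour `γ = ∂Q(Θ)` divides the lamBox: `γu` is a
connected component of `γ \ ∂Q(Λ(l))` dividing `Λ(l)` into the `l¹`-connected pieces `Θt` and
`Λ(l) \ Θt`, with `Θ ⊆ Θt` and `F_l^i ∪ F_l^j ⊆ ∂Q(Λ(l) \ Θt)` for untouched sides `i, j`. -/
def UnderlineData (l : ℕ) (Θ : Finset Site) (γu : Finset DBond) (Θt : Finset Site) : Prop :=
  γu ⊆ contourOf Θ \ boxBdry l ∧ DConn γu ∧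
  (∀ e ∈ contourOf Θ \ boxBdry l, e ∉ γu → ∀ f ∈ γu, ¬ DAdj e f) ∧
  Θ ⊆ Θt ∧ Θt ⊆ lamBox l ∧ ConnIn d1 ↑Θt ∧ ConnIn d1 ↑(lamBox l \ Θt) ∧
  interiorBdry l Θt = γu ∧
  ∃ i j : ℤ, (i = 1 ∨ i = -1) ∧ (j = 2 ∨ j = -2) ∧
    ¬ touches l i (contourOf Θ) ∧ ¬ touches l j (contourOf Θ) ∧
    (∀ x, sideSites l i x → x ∉ Θt) ∧ (∀ x, sideSites l j x → x ∉ Θt)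

/-- `γ̄ = ∂Q(Λ(l)) ∩ ∂Q(Θ̃)`. -/
noncomputable def gammaBar (l : ℕ) (Θt : Finset Site) : Finset DBond := boxBdry l ∩ contourOf Θt

/-- `V_ex(γ)` : sites of the exterior boundary attached to dual bonds of `γ`. -/
noncomputable def Vex (l : ℕ) (γ : Finset DBond) : Finset Site :=
  (lamBox l).biUnion fun x => (nbrs x).filter fun y => y ∉ lamBox l ∧ dualBond x y ∈ γ

/-- `T_Θ` : flip the spins in `Θ`. -/
def flipC (Θ : Finset Site) (σ : Site → ℤ) : Site → ℤ :=
  fun x => if x ∈ Θ then -σ x else σ x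

/-- The Ising Hamiltonian `H^ω_{Λ(l)}(σ)` with boundary condition `ω`. -/
noncomputable def Ham (l : ℕ) (ω : Site → ℝ) (σ : Site → ℤ) : ℝ :=
  -(1/2) * ∑ x ∈ lamBox l, ∑ y ∈ (nbrs x).filter (· ∈ lamBox l), ((σ x * σ y : ℤ) : ℝ)
    - ∑ x ∈ lamBox l, ∑ y ∈ (nbrs x).filter (· ∉ lamBox l), (σ x : ℝ) * ω y

/-- `Δ_{γ₁,…,γ_p} H^ω_{Λ(l)}(σ) = H(σ) - H(T_{γ₁}∘⋯∘T_{γ_p} σ)`, the contours being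
recorded by their regions `Θ(γ_j)`. -/
noncomputable def dH (l : ℕ) (ω : Site → ℝ) (Θs : List (Finset Site)) (σ : Site → ℤ) : ℝ :=
  Ham l ω σ - Ham l ω (Θs.foldr flipC σ)

/-- `C` is an (ε)-cluster in `Λ(l)` at `σ` : a maximal `l¹`-connected component of
`{x ∈ Λ(l) : σ_x = ε}`. -/
def IsCluster (l : ℕ) (σ : Site → ℤ) (ε : ℤ) (C : Finset Site) : Prop :=
  C.Nonempty ∧ (∀ x ∈ C, x ∈ lamBox l ∧ σ x = ε) ∧ ConnIn d1 ↑C ∧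
  ∀ y ∈ lamBox l, σ y = ε → (∃ x ∈ C, d1 x y = 1) → y ∈ C

/-- The `l¹`-connected component of `x` within `S`. -/
def l1Comp (S : Set Site) (x : Site) : Set Site := {y | ChainIn d1 S x y}

/-- `C` together with the bounded components of its complement; `∂Q(fill C)` is the outer
boundary of `Q(C)`. -/
def fill (C : Finset Site) : Set Site :=
  ↑C ∪ {x | (l1Comp ((↑C : Set Site)ᶜ) x).Finite}

/-- `Θ` is the region `Θ(γ)` of an (ε)-contour `γ` in `Λ(l)` at `σ`. -/
def IsEContour (l : ℕ) (σ : Site → ℤ) (ε : ℤ) (Θ : Finset Site) : Prop :=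
  ∃ C : Finset Site, IsCluster l σ ε C ∧ (↑Θ : Set Site) = fill C

/-- A dual bond is horizontal. -/
def isHorizD (e : DBond) : Prop := ∃ v w : Site, e = s(v, w) ∧ v.2 = w.2

/-- A dual bond is vertical. -/
def isVertD (e : DBond) : Prop := ∃ v w : Site, e = s(v, w) ∧ v.1 = w.1

open Classical in
/-- The number of horizontal dual bonds in `γ`. -/
noncomputable def horizCount (γ : Finset DBond) : ℕ := (γ.filter isHorizD).card

open Classical in
/-- The number of vertical dual bonds in `γ`. -/
noncomputable def vertCount (γ : Finset DBond) : ℕ := (γ.filter isVertD).card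

/-! ### Glauber dynamics -/

/-- Configurations on a finite `Λ ⊂ ℤ²` (`true` = spin `+1`, `false` = spin `-1`). -/
abbrev Cfg (Λ : Finset Site) := ↥Λ → Bool

/-- The spin value of a Boolean. -/
def spinVal (b : Bool) : ℝ := if b then 1 else -1

/-- The Ising Hamiltonian on a general finite `Λ`. -/
noncomputable def HamG (Λ : Finset Site) (ω : Site → ℝ) (σ : Cfg Λ) : ℝ :=
  -(1/2) * ∑ x : ↥Λ, ∑ y : ↥Λ, (if d1 ↑x ↑y = 1 then spinVal (σ x) * spinVal (σ y) else 0)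
    - ∑ x : ↥Λ, ∑ y ∈ (nbrs ↑x).filter (· ∉ Λ), spinVal (σ x) * ω y

/-- The finite-volume Gibbs measure `μ^ω_Λ` at inverse temperature `β`. -/
noncomputable def gibbs (Λ : Finset Site) (ω : Site → ℝ) (β : ℝ) (σ : Cfg Λ) : ℝ :=
  Real.exp (-β * HamG Λ ω σ) / ∑ τ : Cfg Λ, Real.exp (-β * HamG Λ ω τ)

/-- The mean of `f` under the weights `μ`. -/
noncomputable def meanW (Λ : Finset Site) (μ f : Cfg Λ → ℝ) : ℝ := ∑ σ : Cfg Λ, μ σ * f σ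

/-- `σ^x` : flip the spin at `x`. -/
def flipAt (Λ : Finset Site) (σ : Cfg Λ) (x : ↥Λ) : Cfg Λ := Function.update σ x (!(σ x))

/-- The generator `A^ω_Λ` of the stochastic Ising model with flip rates `q`. -/
noncomputable def genA (Λ : Finset Site) (q : ↥Λ → Cfg Λ → ℝ) (f : Cfg Λ → ℝ) (σ : Cfg Λ) : ℝ :=
  ∑ x : ↥Λ, q x σ * (f (flipAt Λ σ x) - f σ)

/-- The variance `μ(|f - μf|²)`. -/
noncomputable def varW (Λ : Finset Site) (μ f : Cfg Λ → ℝ) : ℝ :=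
  meanW Λ μ (fun σ => |f σ - meanW Λ μ f| ^ 2)

/-- The spectral gap `gap(Λ, ω, β)` : the infimum of the Rayleigh quotients
`-μ(f A f) / μ(|f - μf|²)`. -/
noncomputable def specGap (Λ : Finset Site) (ω : Site → ℝ) (β : ℝ)
    (q : ↥Λ → Cfg Λ → ℝ) : ℝ :=
  sInf { r | ∃ f : Cfg Λ → ℝ, varW Λ (gibbs Λ ω β) f ≠ 0 ∧
    r = (- meanW Λ (gibbs Λ ω β) fun σ => f σ * genA Λ q f σ) / varW Λ (gibbs Λ ω β) f }

/-- The `±1`-spin function of a configuration on `Λ(l)` (`0` outside the lamBox). -/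
noncomputable def toSpin (l : ℕ) (σ : Cfg (lamBox l)) : Site → ℤ :=
  fun x => if h : x ∈ lamBox l then (if σ ⟨x, h⟩ then 1 else -1) else 0

/-- The magnetization at the origin, `μ^ω_{Λ(l)}(σ₀)`. -/
noncomputable def magZero (l : ℕ) (ω : Site → ℝ) (β : ℝ) : ℝ :=
  ∑ σ : Cfg (lamBox l), gibbs (lamBox l) ω β σ * ((toSpin l σ (0, 0) : ℤ) : ℝ)

/-- The favoured sign `ε_{l,ω}`. -/
noncomputable def epsSign (l : ℕ) (ω : Site → ℝ) (β : ℝ) : ℤ :=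
  if 0 ≤ magZero l ω β then 1 else -1

/-- The trap event `Γ_l` : some (ε)-contour `γ` at `σ` meets `∂Q(Λ(l))` and has
`|γ| ≥ 2δ₁ l`. -/
def GammaEvent (l : ℕ) (δ₁ : ℝ) (ε : ℤ) : Set (Cfg (lamBox l)) :=
  {σ | ∃ Θ : Finset Site, IsEContour l (toSpin l σ) ε Θ ∧
    (contourOf Θ ∩ boxBdry l).Nonempty ∧ 2 * δ₁ * l ≤ ((contourOf Θ).card : ℝ)}

open Classical in
/-- The Gibbs probability of an event `S ⊂ Ω_{Λ(l)}`. -/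
noncomputable def probOf (l : ℕ) (ω : Site → ℝ) (β : ℝ) (S : Set (Cfg (lamBox l))) : ℝ :=
  ∑ σ ∈ Finset.univ.filter (· ∈ S), gibbs (lamBox l) ω β σ

/-- Union of the contours of a list of regions. -/
def unionB (L : List (Finset Site)) : Finset DBond :=
  L.foldr (fun Θ s => contourOf Θ ∪ s) ∅

/-- Union of a list of regions. -/
def unionR (L : List (Finset Site)) : Finset Site :=
  L.foldr (· ∪ ·) ∅

/-!
Flipping a contour region `Θ` changes the energy only along the bonds leaving `Θ`. A bond
inside `Λ(l)` joins a site of the `ε`-cluster to a site of spin `-ε` and costs `2`; a bond to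
an exterior site `y` contributes `-2εω_y`. Distinct contours do not cut each other's bonds, so
these changes add up: `(1/2)Δ = X - ε ∑_{y ∈ W} ω_y`, where `X` counts the inner crossing bonds
(so `∑_j |γ̲_j| ≤ X`) and `W ⊆ I` is the set of exterior sites next to the contours.

Bounding `∑_W ω` by `|W|` and, through the mixing condition, by `δ|I| + |I \ W|`, and averaging
the two bounds gives `2|∑_W ω| ≤ (1 + δ)|I| ≤ (1 + δ)(X + c)`, hence
`(1/2)Δ ≥ (1 - δ)/2 · (X + c) - c`. Finally `δl ≤ |I| ≤ X + c` and
`∑_j |γ_j| ≤ X + |W| ≤ 2(X + c)`, so `ε₀ = (1 - δ)/2 · min δ (1/2)` works.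
-/

lemma mem_nbrs_iff {x y : Site} : y ∈ nbrs x ↔ d1 x y = 1 := by
  obtain ⟨a, b⟩ := x
  obtain ⟨u, v⟩ := y
  simp only [nbrs, Finset.mem_insert, Finset.mem_singleton, d1, Prod.ext_iff, abs_eq_max_neg]
  omega

lemma mem_nbrs_comm {x y : Site} : y ∈ nbrs x ↔ x ∈ nbrs y := by
  simp only [mem_nbrs_iff, d1, abs_sub_comm]

lemma mem_lamBox_iff {l : ℕ} {z : Site} :
    z ∈ lamBox l ↔ lamLo l ≤ z.1 ∧ z.1 ≤ lamHi l ∧ lamLo l ≤ z.2 ∧ z.2 ≤ lamHi l := by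
  simp only [lamBox, Finset.mem_Icc, Prod.le_def]
  tauto

lemma eq_of_mem_nbrs_of_notMem_lamBox {l : ℕ} {x₁ x₂ y : Site} (hy : y ∉ lamBox l)
    (h₁ : x₁ ∈ lamBox l) (h₂ : x₂ ∈ lamBox l) (hy₁ : y ∈ nbrs x₁) (hy₂ : y ∈ nbrs x₂) :
    x₁ = x₂ := by
  rw [mem_lamBox_iff] at h₁ h₂ hy
  rw [mem_nbrs_iff, d1, abs_eq_max_neg, abs_eq_max_neg] at hy₁ hy₂
  rw [Prod.ext_iff]
  omega

lemma ChainIn.cons {d : Site → Site → ℤ} {S : Set Site} {x y z : Site}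
    (hx : x ∈ S) (hxy : d x y = 1) : ChainIn d S y z → ChainIn d S x z := by
  rintro ⟨_ | ⟨y', L⟩, hc, hh, hl, hm⟩
  · simp at hh
  obtain rfl : y' = y := by simpa using hh
  refine ⟨x :: y' :: L, List.isChain_cons_cons.2 ⟨hxy, hc⟩, rfl, ?_, ?_⟩
  · rwa [List.getLast?_cons_cons]
  · simpa [hx] using hm

lemma ChainIn.induction {d : Site → Site → ℤ} {S : Set Site} {x y : Site} (p : Site → Prop)
    (h : ChainIn d S x y) (hx : p x) (step : ∀ a ∈ S, ∀ b ∈ S, d a b = 1 → p a → p b) :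
    p y := by
  obtain ⟨L, hc, hh, hl, hm⟩ := h
  have hc' : L.IsChain fun a b => a ∈ S ∧ b ∈ S ∧ d a b = 1 :=
    hc.imp_of_mem_imp fun a b ha hb hab => ⟨hm a ha, hm b hb, hab⟩
  refine hc'.induction p L (fun a b ⟨ha, hb, hab⟩ => step a ha b hb hab) (fun hne => ?_) y
    (List.mem_of_getLast? hl)
  rwa [(List.head_eq_iff_head?_eq_some hne).2 hh]

lemma l1Comp_subset_of_adj {S : Set Site} {x y : Site} (hx : x ∈ S) (hxy : d1 x y = 1) :
    l1Comp S y ⊆ l1Comp S x :=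
  fun _ hz => ChainIn.cons hx hxy hz

lemma chainIn_of_forall_succ {S : Set Site} (f : ℕ → Site) (hS : ∀ n, f n ∈ S)
    (hf : ∀ n, d1 (f n) (f (n + 1)) = 1) (n : ℕ) : ChainIn d1 S (f 0) (f n) := by
  refine ⟨(List.range (n + 1)).map f, ?_, ?_, ?_, ?_⟩
  · change List.IsChain _ _
    rw [List.isChain_map, List.isChain_range_succ]
    exact fun m _ => hf m
  · simp [List.range_succ_eq_map]
  · simp [List.range_succ]
  · simpa using fun m _ => hS m

lemma exists_ray_notMem_lamBox {l : ℕ} {x : Site} (hx : x ∉ lamBox l) :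
    ∃ v : Site, d1 0 v = 1 ∧ ∀ n : ℕ, x + (n : ℤ) • v ∉ lamBox l := by
  rw [mem_lamBox_iff] at hx
  simp only [mem_lamBox_iff, Prod.fst_add, Prod.snd_add, Prod.smul_fst, Prod.smul_snd,
    smul_eq_mul, d1]
  by_cases h₁ : x.1 < lamLo l
  · exact ⟨(-1, 0), by norm_num, fun n => by omega⟩
  by_cases h₂ : lamHi l < x.1
  · exact ⟨(1, 0), by norm_num, fun n => by omega⟩
  by_cases h₃ : x.2 < lamLo l
  · exact ⟨(0, -1), by norm_num, fun n => by omega⟩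
  · exact ⟨(0, 1), by norm_num, fun n => by omega⟩

lemma l1Comp_compl_infinite {l : ℕ} {C : Finset Site} (hC : C ⊆ lamBox l) {x : Site}
    (hx : x ∉ lamBox l) : (l1Comp ((↑C : Set Site)ᶜ) x).Infinite := by
  obtain ⟨v, hv, hray⟩ := exists_ray_notMem_lamBox hx
  set f : ℕ → Site := fun n => x + (n : ℤ) • v
  have hfC : ∀ n, f n ∈ ((↑C : Set Site)ᶜ) := fun n hn => hray n (hC hn)
  have hstep : ∀ n, d1 (f n) (f (n + 1)) = 1 := fun n => by
    have hsub : ∀ b : ℤ, n * b - (n + 1) * b = -b := fun b => by ring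
    simpa [f, d1, hsub] using hv
  have hv0 : v ≠ 0 := by
    rintro rfl
    simp [d1] at hv
  have hinj : Function.Injective f := fun m n hmn =>
    Nat.cast_injective (R := ℤ) (smul_left_injective ℤ hv0 (add_left_cancel hmn))
  have hf0 : f 0 = x := by simp [f]
  exact Set.infinite_of_injective_forall_mem hinj
    fun n => hf0 ▸ chainIn_of_forall_succ f hfC hstep n

lemma mem_fill_of_adj {C : Finset Site} {x y : Site} (hx : x ∈ fill C) (hxC : x ∉ C)
    (hxy : d1 x y = 1) : y ∈ fill C := by
  by_cases hyC : y ∈ C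
  · exact Or.inl hyC
  · refine Or.inr (Set.Finite.subset ?_ (l1Comp_subset_of_adj hxC hxy))
    exact hx.resolve_left hxC

lemma mem_of_mem_fill_of_adj {C : Finset Site} {x y : Site} (hx : x ∈ fill C)
    (hy : y ∉ fill C) (hxy : d1 x y = 1) : x ∈ C := by
  by_contra hxC
  exact hy (mem_fill_of_adj hx hxC hxy)

lemma fill_subset_lamBox {l : ℕ} {C : Finset Site} (hC : C ⊆ lamBox l) :
    fill C ⊆ ↑(lamBox l) := by
  rintro x (hx | hx)
  · exact hC hx
  · by_contra hxB
    exact l1Comp_compl_infinite hC hxB hx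

lemma subset_of_coe_eq_fill {C Θ : Finset Site} (h : (↑Θ : Set Site) = fill C) : C ⊆ Θ :=
  fun x hx => by rw [← Finset.mem_coe, h]; exact Or.inl hx

section Clusters

variable {l : ℕ} {σ : Site → ℤ} {ε : ℤ}

lemma IsCluster.subset_lamBox {C : Finset Site} (hC : IsCluster l σ ε C) : C ⊆ lamBox l :=
  fun _ hx => (hC.2.1 _ hx).1

lemma IsCluster.spin_ne_of_adj {C : Finset Site} (hC : IsCluster l σ ε C) {x y : Site}
    (hx : x ∈ C) (hyB : y ∈ lamBox l) (hyC : y ∉ C) (hxy : d1 x y = 1) : σ y ≠ ε :=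
  fun hy => hyC (hC.2.2.2 y hyB hy ⟨x, hx, hxy⟩)

lemma IsCluster.subset_of_mem {C₁ C₂ : Finset Site} (h₁ : IsCluster l σ ε C₁)
    (h₂ : IsCluster l σ ε C₂) {z : Site} (hz₁ : z ∈ C₁) (hz₂ : z ∈ C₂) : C₁ ⊆ C₂ :=
  fun _ ha => (h₁.2.2.1 z hz₁ _ ha).induction (· ∈ C₂) hz₂
    fun a _ b hb hab haC => h₂.2.2.2 b (h₁.2.1 b hb).1 (h₁.2.1 b hb).2 ⟨a, haC, hab⟩

lemma IsCluster.eq_of_mem {C₁ C₂ : Finset Site} (h₁ : IsCluster l σ ε C₁)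
    (h₂ : IsCluster l σ ε C₂) {z : Site} (hz₁ : z ∈ C₁) (hz₂ : z ∈ C₂) : C₁ = C₂ :=
  (h₁.subset_of_mem h₂ hz₁ hz₂).antisymm (h₂.subset_of_mem h₁ hz₂ hz₁)

end Clusters

/-- Flipping the spins of `Θ'` leaves the energy of every bond crossing `∂Θ` unchanged. -/
def NotCutBy (Θ' Θ : Finset Site) : Prop :=
  ∀ x ∈ Θ, ∀ y ∈ nbrs x, y ∉ Θ → (x ∈ Θ' ↔ y ∈ Θ')

namespace IsEContour

variable {l : ℕ} {σ : Site → ℤ} {ε : ℤ} {Θ : Finset Site}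

lemma subset_lamBox (hΘ : IsEContour l σ ε Θ) : Θ ⊆ lamBox l := by
  obtain ⟨C, hC, hfill⟩ := hΘ
  intro x hx
  exact fill_subset_lamBox hC.subset_lamBox (hfill ▸ hx)

lemma spin_eq_of_adj (hΘ : IsEContour l σ ε Θ) {x y : Site} (hx : x ∈ Θ) (hy : y ∉ Θ)
    (hxy : y ∈ nbrs x) : σ x = ε := by
  obtain ⟨C, hC, hfill⟩ := hΘ
  have hxC : x ∈ C := mem_of_mem_fill_of_adj (hfill ▸ hx) (hfill ▸ hy) (mem_nbrs_iff.1 hxy)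
  exact (hC.2.1 x hxC).2

lemma spin_eq_neg_of_adj (hΘ : IsEContour l σ ε Θ) (hσ : ∀ x ∈ lamBox l, σ x = 1 ∨ σ x = -1)
    (hε : ε = 1 ∨ ε = -1) {x y : Site} (hx : x ∈ Θ) (hy : y ∉ Θ) (hyB : y ∈ lamBox l)
    (hxy : y ∈ nbrs x) : σ y = -ε := by
  obtain ⟨C, hC, hfill⟩ := hΘ
  have hxC : x ∈ C := mem_of_mem_fill_of_adj (hfill ▸ hx) (hfill ▸ hy) (mem_nbrs_iff.1 hxy)
  have hyC : y ∉ C := fun h => hy (subset_of_coe_eq_fill hfill h)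
  have := hC.spin_ne_of_adj hxC hyB hyC (mem_nbrs_iff.1 hxy)
  rcases hσ y hyB with h | h <;> rcases hε with rfl | rfl <;> omega

/-- Both ends of a bond leaving `Θ` lie outside the cluster `C'` of `Θ'` (the outer end has
spin `-ε` or lies outside `Λ(l)`), and adjacent sites outside `C'` lie in the same component of
its complement, so both or neither are in `fill C' = Θ'`. -/
lemma notCutBy {Θ' : Finset Site} (hΘ : IsEContour l σ ε Θ) (hΘ' : IsEContour l σ ε Θ')
    (hne : Θ' ≠ Θ) : NotCutBy Θ' Θ := by
  obtain ⟨C, hC, hfill⟩ := hΘ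
  obtain ⟨C', hC', hfill'⟩ := hΘ'
  intro x hx y hxy hy
  have hxy₁ := mem_nbrs_iff.1 hxy
  have hxC : x ∈ C := mem_of_mem_fill_of_adj (hfill ▸ hx) (hfill ▸ hy) hxy₁
  have hxC' : x ∉ C' := fun h => hne <| Finset.coe_injective <| by
    rw [hfill, hfill', hC.eq_of_mem hC' hxC h]
  have hyC' : y ∉ C' := fun h => by
    have hyB := hC'.subset_lamBox h
    exact hC.spin_ne_of_adj hxC hyB (fun h' => hy (subset_of_coe_eq_fill hfill h')) hxy₁
      (hC'.2.1 y h).2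
  rw [← Finset.mem_coe, ← Finset.mem_coe, hfill']
  exact ⟨fun h => mem_fill_of_adj h hxC' hxy₁,
    fun h => mem_fill_of_adj h hyC' (mem_nbrs_iff.1 (mem_nbrs_comm.1 hxy))⟩

end IsEContour

lemma flipC_mul_flipC (Θ : Finset Site) (σ : Site → ℤ) (x y : Site) :
    flipC Θ σ x * flipC Θ σ y = if (x ∈ Θ ↔ y ∈ Θ) then σ x * σ y else -(σ x * σ y) := by
  unfold flipC
  by_cases hx : x ∈ Θ <;> by_cases hy : y ∈ Θ <;> simp [hx, hy]

noncomputable def crossNbrs (l : ℕ) (Θ : Finset Site) (x : Site) : Finset Site :=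
  (nbrs x).filter fun y => y ∈ lamBox l ∧ y ∉ Θ

lemma mem_crossNbrs {l : ℕ} {Θ : Finset Site} {x y : Site} :
    y ∈ crossNbrs l Θ x ↔ y ∈ nbrs x ∧ y ∈ lamBox l ∧ y ∉ Θ :=
  Finset.mem_filter

lemma sum_bonds_eq_two_mul_sum_bdry {l : ℕ} {Θ : Finset Site} (hΘ : Θ ⊆ lamBox l)
    (F : Site → Site → ℝ) (hF : ∀ x y, F x y = F y x) (h0 : ∀ x y, (x ∈ Θ ↔ y ∈ Θ) → F x y = 0) :
    ∑ x ∈ lamBox l, ∑ y ∈ (nbrs x).filter (· ∈ lamBox l), F x y =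
      2 * ∑ x ∈ Θ, ∑ y ∈ crossNbrs l Θ x, F x y := by
  have hsplit : ∀ x, ∑ y ∈ (nbrs x).filter (· ∈ lamBox l), F x y =
      ∑ y ∈ crossNbrs l Θ x, F x y +
        ∑ y ∈ (nbrs x).filter (fun y => y ∈ lamBox l ∧ y ∈ Θ), F x y := fun x => by
    rw [← Finset.sum_filter_add_sum_filter_not ((nbrs x).filter (· ∈ lamBox l)) (· ∉ Θ),
      Finset.filter_filter, Finset.filter_filter]
    simp only [not_not, crossNbrs]
  have hin : ∑ x ∈ Θ, ∑ y ∈ (nbrs x).filter (fun y => y ∈ lamBox l ∧ y ∈ Θ), F x y = 0 :=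
    Finset.sum_eq_zero fun x hx => Finset.sum_eq_zero fun y hy =>
      h0 x y (iff_of_true hx (Finset.mem_filter.1 hy).2.2)
  have hout : ∑ x ∈ lamBox l \ Θ, ∑ y ∈ crossNbrs l Θ x,
      F x y = 0 :=
    Finset.sum_eq_zero fun x hx => Finset.sum_eq_zero fun y hy =>
      h0 x y (iff_of_false (Finset.mem_sdiff.1 hx).2 (mem_crossNbrs.1 hy).2.2)
  have hswap : ∑ x ∈ lamBox l \ Θ, ∑ y ∈ (nbrs x).filter (fun y => y ∈ lamBox l ∧ y ∈ Θ),
      F x y = ∑ x ∈ Θ, ∑ y ∈ crossNbrs l Θ x, F x y := by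
    rw [Finset.sum_comm' (t' := Θ) (s' := crossNbrs l Θ)]
    · exact Finset.sum_congr rfl fun y _ => Finset.sum_congr rfl fun x _ => hF x y
    · intro x y
      simp only [Finset.mem_sdiff, Finset.mem_filter, mem_crossNbrs, mem_nbrs_comm (x := x)]
      constructor
      · rintro ⟨⟨hxB, hxΘ⟩, hyx, -, hyΘ⟩
        exact ⟨⟨hyx, hxB, hxΘ⟩, hyΘ⟩
      · rintro ⟨⟨hyx, hxB, hxΘ⟩, hyΘ⟩
        exact ⟨⟨hxB, hxΘ⟩, hyx, hΘ hyΘ, hyΘ⟩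
  rw [← Finset.sum_sdiff hΘ]
  simp only [hsplit, Finset.sum_add_distrib]
  rw [hin, hout, hswap]
  ring

lemma dH_singleton {l : ℕ} {Θ : Finset Site} (hΘ : Θ ⊆ lamBox l) (ω : Site → ℝ)
    (σ : Site → ℤ) :
    dH l ω [Θ] σ =
      -2 * ∑ x ∈ Θ, ∑ y ∈ crossNbrs l Θ x,
          ((σ x * σ y : ℤ) : ℝ) -
        2 * ∑ x ∈ Θ, ∑ y ∈ (nbrs x).filter (· ∉ lamBox l), (σ x : ℝ) * ω y := by
  set τ := flipC Θ σ
  have hbonds : ∑ x ∈ lamBox l, ∑ y ∈ (nbrs x).filter (· ∈ lamBox l),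
        (((τ x * τ y : ℤ) : ℝ) - ((σ x * σ y : ℤ) : ℝ)) =
      2 * ∑ x ∈ Θ, ∑ y ∈ crossNbrs l Θ x,
        -2 * ((σ x * σ y : ℤ) : ℝ) := by
    rw [sum_bonds_eq_two_mul_sum_bdry hΘ]
    · refine congrArg _ (Finset.sum_congr rfl fun x hx => Finset.sum_congr rfl fun y hy => ?_)
      rw [flipC_mul_flipC, if_neg (by simp [hx, (mem_crossNbrs.1 hy).2.2])]
      push_cast
      ring
    · intro x y
      rw [flipC_mul_flipC, flipC_mul_flipC, mul_comm (σ y)]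
      simp only [iff_comm (a := x ∈ Θ)]
    · intro x y hxy
      rw [flipC_mul_flipC, if_pos hxy, sub_self]
  have hfield : ∑ x ∈ lamBox l, ∑ y ∈ (nbrs x).filter (· ∉ lamBox l),
        ((τ x : ℝ) * ω y - (σ x : ℝ) * ω y) =
      ∑ x ∈ Θ, ∑ y ∈ (nbrs x).filter (· ∉ lamBox l), -2 * ((σ x : ℝ) * ω y) := by
    refine (Finset.sum_subset hΘ fun x _ hx => Finset.sum_eq_zero fun y _ => ?_).symm.trans
      (Finset.sum_congr rfl fun x hx => Finset.sum_congr rfl fun y _ => ?_)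
    · simp [τ, flipC, hx]
    · simp only [τ, flipC, if_pos hx]
      push_cast
      ring
  simp only [Finset.sum_sub_distrib] at hbonds hfield
  have hpull : ∀ (c : ℝ) (f : Site → Site → ℝ) (t : Site → Finset Site),
      ∑ x ∈ Θ, ∑ y ∈ t x, c * f x y = c * ∑ x ∈ Θ, ∑ y ∈ t x, f x y := fun c f t => by
    simp only [Finset.mul_sum]
  rw [hpull] at hbonds hfield
  simp only [dH, List.foldr_cons, List.foldr_nil, Ham]
  linear_combination (1 / 2 : ℝ) * hbonds + hfield

lemma foldr_flipC_mul_of_forall_iff {L : List (Finset Site)} {σ : Site → ℤ} {x y : Site}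
    (h : ∀ Θ ∈ L, x ∈ Θ ↔ y ∈ Θ) :
    L.foldr flipC σ x * L.foldr flipC σ y = σ x * σ y := by
  induction L with
  | nil => rfl
  | cons Θ t ih =>
    rw [List.foldr_cons, flipC_mul_flipC, if_pos (h Θ List.mem_cons_self),
      ih fun Θ' hΘ' => h Θ' (List.mem_cons_of_mem _ hΘ')]

lemma foldr_flipC_of_forall_notMem {L : List (Finset Site)} {σ : Site → ℤ} {x : Site}
    (h : ∀ Θ ∈ L, x ∉ Θ) : L.foldr flipC σ x = σ x := by
  induction L with
  | nil => rfl
  | cons Θ t ih =>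
    rw [List.foldr_cons, flipC, if_neg (h Θ List.mem_cons_self),
      ih fun Θ' hΘ' => h Θ' (List.mem_cons_of_mem _ hΘ')]

lemma dH_singleton_foldr_flipC {l : ℕ} {Θ : Finset Site} {L : List (Finset Site)}
    (hΘ : Θ ⊆ lamBox l) (hL : ∀ Θ' ∈ L, Θ' ⊆ lamBox l ∧ NotCutBy Θ' Θ) (ω : Site → ℝ)
    (σ : Site → ℤ) : dH l ω [Θ] (L.foldr flipC σ) = dH l ω [Θ] σ := by
  rw [dH_singleton hΘ, dH_singleton hΘ]
  congr 2
  · refine Finset.sum_congr rfl fun x hx => Finset.sum_congr rfl fun y hy => ?_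
    obtain ⟨hxy, -, hyΘ⟩ := mem_crossNbrs.1 hy
    rw [foldr_flipC_mul_of_forall_iff fun Θ' hΘ' => (hL Θ' hΘ').2 x hx y hxy hyΘ]
  · refine Finset.sum_congr rfl fun x hx => Finset.sum_congr rfl fun y hy => ?_
    obtain ⟨hxy, hyB⟩ := Finset.mem_filter.1 hy
    rw [foldr_flipC_of_forall_notMem fun Θ' hΘ' hxΘ' => hyB <| (hL Θ' hΘ').1 <|
      ((hL Θ' hΘ').2 x hx y hxy (fun hyΘ => hyB (hΘ hyΘ))).1 hxΘ']

lemma dH_eq_sum_of_pairwise {l : ℕ} (ω : Site → ℝ) (σ : Site → ℤ) {L : List (Finset Site)}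
    (hL : ∀ Θ ∈ L, Θ ⊆ lamBox l) (hcut : L.Pairwise fun Θ Θ' => NotCutBy Θ' Θ) :
    dH l ω L σ = (L.map fun Θ => dH l ω [Θ] σ).sum := by
  induction L with
  | nil => simp [dH]
  | cons Θ t ih =>
    rw [List.pairwise_cons] at hcut
    have hstep : dH l ω (Θ :: t) σ = dH l ω t σ + dH l ω [Θ] (t.foldr flipC σ) := by
      simp only [dH, List.foldr_cons, List.foldr_nil]
      ring
    rw [hstep, dH_singleton_foldr_flipC (hL Θ List.mem_cons_self)
        (fun Θ' hΘ' => ⟨hL Θ' (List.mem_cons_of_mem _ hΘ'), hcut.1 Θ' hΘ'⟩),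
      ih (fun Θ' hΘ' => hL Θ' (List.mem_cons_of_mem _ hΘ')) hcut.2, List.map_cons,
      List.sum_cons, add_comm]

noncomputable def crossCount (l : ℕ) (Θ : Finset Site) : ℕ :=
  ∑ x ∈ Θ, (crossNbrs l Θ x).card

noncomputable def extNbrs (l : ℕ) (Θ : Finset Site) : Finset Site :=
  Θ.biUnion fun x => (nbrs x).filter (· ∉ lamBox l)

section Counting

variable {l : ℕ} {Θ : Finset Site}

lemma pairwiseDisjoint_extNbrs_filter (hΘ : Θ ⊆ lamBox l) :
    (↑Θ : Set Site).PairwiseDisjoint fun x => (nbrs x).filter (· ∉ lamBox l) :=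
  fun _ hx₁ _ hx₂ hne => Finset.disjoint_left.2 fun _ hy₁ hy₂ => hne <|
    eq_of_mem_nbrs_of_notMem_lamBox (Finset.mem_filter.1 hy₁).2 (hΘ hx₁) (hΘ hx₂)
      (Finset.mem_filter.1 hy₁).1 (Finset.mem_filter.1 hy₂).1

lemma disjoint_extNbrs {Θ' : Finset Site} (hΘ : Θ ⊆ lamBox l) (hΘ' : Θ' ⊆ lamBox l)
    (hcut : NotCutBy Θ' Θ) : Disjoint (extNbrs l Θ') (extNbrs l Θ) := by
  refine Finset.disjoint_left.2 fun y hy' hy => ?_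
  simp only [extNbrs, Finset.mem_biUnion, Finset.mem_filter] at hy' hy
  obtain ⟨x', hx', hyx', hyB⟩ := hy'
  obtain ⟨x, hx, hyx, -⟩ := hy
  obtain rfl := eq_of_mem_nbrs_of_notMem_lamBox hyB (hΘ' hx') (hΘ hx) hyx' hyx
  exact hyB (hΘ' ((hcut x' hx y hyx fun h => hyB (hΘ h)).1 hx'))

lemma card_interiorBdry_le : (interiorBdry l Θ).card ≤ crossCount l Θ :=
  Finset.card_biUnion_le.trans (Finset.sum_le_sum fun _ _ => Finset.card_image_le)

lemma contourOf_sdiff_boxBdry_subset (hΘ : Θ ⊆ lamBox l) :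
    contourOf Θ \ boxBdry l ⊆ interiorBdry l Θ := by
  intro e he
  obtain ⟨he, hnB⟩ := Finset.mem_sdiff.1 he
  simp only [contourOf, Finset.mem_biUnion, Finset.mem_image, Finset.mem_filter] at he
  obtain ⟨x, hx, y, ⟨hxy, hyΘ⟩, rfl⟩ := he
  have hyB : y ∈ lamBox l := by
    by_contra hyB
    exact hnB (Finset.mem_biUnion.2
      ⟨x, hΘ hx, Finset.mem_image.2 ⟨y, Finset.mem_filter.2 ⟨hxy, hyB⟩, rfl⟩⟩)
  exact Finset.mem_biUnion.2
    ⟨x, hx, Finset.mem_image.2 ⟨y, Finset.mem_filter.2 ⟨hxy, hyB, hyΘ⟩, rfl⟩⟩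

lemma card_le_crossCount {γ : Finset DBond} (hΘ : Θ ⊆ lamBox l)
    (hγ : γ ⊆ contourOf Θ \ boxBdry l) : γ.card ≤ crossCount l Θ :=
  (Finset.card_le_card (hγ.trans (contourOf_sdiff_boxBdry_subset hΘ))).trans card_interiorBdry_le

lemma card_contourOf_le (hΘ : Θ ⊆ lamBox l) :
    (contourOf Θ).card ≤ crossCount l Θ + (extNbrs l Θ).card := by
  rw [crossCount, extNbrs, Finset.card_biUnion (pairwiseDisjoint_extNbrs_filter hΘ),
    ← Finset.sum_add_distrib]
  refine Finset.card_biUnion_le.trans (Finset.sum_le_sum fun x _ => ?_)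
  refine Finset.card_image_le.trans ((Finset.card_le_card ?_).trans (Finset.card_union_le _ _))
  intro y hy
  simp only [Finset.mem_union, Finset.mem_filter, mem_crossNbrs] at hy ⊢
  tauto

lemma extNbrs_subset_Vex {Θt : Finset Site} (hΘΘt : Θ ⊆ Θt) (hΘt : Θt ⊆ lamBox l) :
    extNbrs l Θ ⊆ Vex l (gammaBar l Θt) := by
  intro y hy
  simp only [extNbrs, Finset.mem_biUnion, Finset.mem_filter] at hy
  obtain ⟨x, hx, hxy, hyB⟩ := hy
  have hxB := hΘt (hΘΘt hx)
  refine Finset.mem_biUnion.2 ⟨x, hxB, Finset.mem_filter.2 ⟨hxy, hyB, ?_⟩⟩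
  refine Finset.mem_inter.2 ⟨?_, ?_⟩
  · exact Finset.mem_biUnion.2 ⟨x, hxB, Finset.mem_image.2 ⟨y, Finset.mem_filter.2 ⟨hxy, hyB⟩, rfl⟩⟩
  · exact Finset.mem_biUnion.2 ⟨x, hΘΘt hx,
      Finset.mem_image.2 ⟨y, Finset.mem_filter.2 ⟨hxy, fun h => hyB (hΘt h)⟩, rfl⟩⟩

end Counting

lemma IsEContour.half_dH_singleton {l : ℕ} {σ : Site → ℤ} {ε : ℤ} {Θ : Finset Site}
    (hΘ : IsEContour l σ ε Θ) (hσ : ∀ x ∈ lamBox l, σ x = 1 ∨ σ x = -1) (hε : ε = 1 ∨ ε = -1)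
    (ω : Site → ℝ) :
    (1 / 2 : ℝ) * dH l ω [Θ] σ = crossCount l Θ - ε * ∑ y ∈ extNbrs l Θ, ω y := by
  have hΘB := hΘ.subset_lamBox
  have hbond : ∀ x ∈ Θ, ∀ y ∈ crossNbrs l Θ x,
      ((σ x * σ y : ℤ) : ℝ) = -1 := fun x hx y hy => by
    obtain ⟨hxy, hyB, hyΘ⟩ := mem_crossNbrs.1 hy
    rw [hΘ.spin_eq_of_adj hx hyΘ hxy, hΘ.spin_eq_neg_of_adj hσ hε hx hyΘ hyB hxy]
    rcases hε with rfl | rfl <;> norm_num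
  have hfield : ∀ x ∈ Θ, ∀ y ∈ (nbrs x).filter (· ∉ lamBox l),
      (σ x : ℝ) * ω y = ε * ω y := fun x hx y hy => by
    obtain ⟨hxy, hyB⟩ := Finset.mem_filter.1 hy
    rw [hΘ.spin_eq_of_adj hx (fun h => hyB (hΘB h)) hxy]
  rw [dH_singleton hΘB, extNbrs, Finset.sum_biUnion (pairwiseDisjoint_extNbrs_filter hΘB),
    crossCount, Finset.sum_congr rfl fun x hx => Finset.sum_congr rfl (hbond x hx),
    Finset.sum_congr rfl fun x hx => Finset.sum_congr rfl (hfield x hx)]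
  simp only [Finset.sum_const, nsmul_eq_mul, mul_neg, mul_one, Finset.sum_neg_distrib,
    ← Finset.mul_sum]
  push_cast
  ring

lemma pairwiseDisjoint_extNbrs_ofFn {l : ℕ} {σ : Site → ℤ} {ε : ℤ} {p : ℕ}
    {Θs : Fin p → Finset Site} (hΘs : ∀ j, IsEContour l σ ε (Θs j))
    (hinj : Function.Injective Θs) :
    (↑(Finset.univ : Finset (Fin p)) : Set (Fin p)).PairwiseDisjoint
      fun j => extNbrs l (Θs j) := fun i _ j _ hij =>
  disjoint_extNbrs (hΘs j).subset_lamBox (hΘs i).subset_lamBox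
    ((hΘs j).notCutBy (hΘs i) (hinj.ne hij))

lemma sum_card_contourOf_le {l : ℕ} {σ : Site → ℤ} {ε : ℤ} {p : ℕ}
    {Θs : Fin p → Finset Site} (hΘs : ∀ j, IsEContour l σ ε (Θs j))
    (hinj : Function.Injective Θs) :
    ∑ j, ((contourOf (Θs j)).card : ℝ) ≤
      ∑ j, (crossCount l (Θs j) : ℝ) + (Finset.univ.biUnion fun j => extNbrs l (Θs j)).card := by
  rw [Finset.card_biUnion (pairwiseDisjoint_extNbrs_ofFn hΘs hinj)]
  push_cast
  rw [← Finset.sum_add_distrib]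
  exact Finset.sum_le_sum fun j _ => by exact_mod_cast card_contourOf_le (hΘs j).subset_lamBox

lemma half_dH_ofFn {l : ℕ} {σ : Site → ℤ} {ε : ℤ} {p : ℕ} {Θs : Fin p → Finset Site}
    (hΘs : ∀ j, IsEContour l σ ε (Θs j)) (hinj : Function.Injective Θs)
    (hσ : ∀ x ∈ lamBox l, σ x = 1 ∨ σ x = -1) (hε : ε = 1 ∨ ε = -1) (ω : Site → ℝ) :
    (1 / 2 : ℝ) * dH l ω (List.ofFn Θs) σ =
      ∑ j, (crossCount l (Θs j) : ℝ) -
        ε * ∑ y ∈ Finset.univ.biUnion fun j => extNbrs l (Θs j), ω y := by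
  have hsub : ∀ Θ ∈ List.ofFn Θs, Θ ⊆ lamBox l := fun Θ hΘ => by
    obtain ⟨j, rfl⟩ := List.mem_ofFn.1 hΘ
    exact (hΘs j).subset_lamBox
  have hcut : (List.ofFn Θs).Pairwise fun Θ Θ' => NotCutBy Θ' Θ :=
    List.pairwise_ofFn.2 fun i j hij => (hΘs i).notCutBy (hΘs j) (hinj.ne hij.ne')
  rw [dH_eq_sum_of_pairwise ω σ hsub hcut, List.map_ofFn, List.sum_ofFn, Finset.mul_sum,
    Finset.sum_biUnion (pairwiseDisjoint_extNbrs_ofFn hΘs hinj), Finset.mul_sum,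
    ← Finset.sum_sub_distrib]
  exact Finset.sum_congr rfl fun j _ => (hΘs j).half_dH_singleton hσ hε ω

lemma two_mul_abs_sum_le_of_subset {α : Type*} [DecidableEq α] {W I : Finset α} {ω : α → ℝ}
    {δ : ℝ} (hWI : W ⊆ I) (hω : ∀ y ∈ I, |ω y| ≤ 1) (hI : |∑ y ∈ I, ω y| ≤ δ * I.card) :
    2 * |∑ y ∈ W, ω y| ≤ (1 + δ) * I.card := by
  have habs : ∀ s ⊆ I, |∑ y ∈ s, ω y| ≤ s.card := fun s hs =>
    (Finset.abs_sum_le_sum_abs _ _).trans <| by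
      simpa using Finset.sum_le_sum fun y hy => hω y (hs hy)
  have hW := habs W hWI
  have hIW := habs (I \ W) Finset.sdiff_subset
  have hcard : ((I \ W).card : ℝ) + W.card = I.card := by
    exact_mod_cast Finset.card_sdiff_add_card_eq_card hWI
  have hsplit : ∑ y ∈ W, ω y = ∑ y ∈ I, ω y - ∑ y ∈ I \ W, ω y := by
    rw [← Finset.sum_sdiff hWI]
    ring
  have hW' : |∑ y ∈ W, ω y| ≤ δ * I.card + (I \ W).card := by
    rw [hsplit]
    exact (abs_sub _ _).trans (add_le_add hI hIW)
  linarith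

lemma min_mul_max_le {δ L S Y : ℝ} (hL : 0 ≤ L) (hS : 0 ≤ S) (hLY : δ * L ≤ Y)
    (hSY : S ≤ 2 * Y) : min δ (1 / 2) * max L S ≤ Y := by
  rcases le_total L S with h | h
  · rw [max_eq_right h]
    nlinarith [min_le_right δ (1 / 2)]
  · rw [max_eq_left h]
    nlinarith [min_le_left δ (1 / 2)]

/-- Under the mixing condition with constant `δ < 1` on intervals of length
`≥ δl`, for non-crossing (ε)-contours `γ₁,…,γ_p` at `σ` and an interval `I` with
`∪_j I(γ_j) ⊆ I` and `δl ≤ |I| ≤ ∑_j |γ̲_j| + c`, one has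
`(1/2)Δ_{γ₁,…,γ_p}H^ω(σ) ≥ ε₀ max{l, ∑_j |γ_j|} - c` with `ε₀ > 0` depending only on `δ`. -/
theorem stmt8 (δ : ℝ) (hδ0 : 0 < δ) (hδ1 : δ < 1) :
    ∃ ε₀ > (0 : ℝ), ∀ l : ℕ, ∀ ω : Site → ℝ,
      (∀ y ∈ extBdry l, |ω y| ≤ 1) →
      (∀ I : Finset Site, IsBdryInterval l I → δ * l ≤ (I.card : ℝ) →
        |∑ y ∈ I, ω y| ≤ δ * I.card) →
      ∀ σ : Site → ℤ, (∀ x ∈ lamBox l, σ x = 1 ∨ σ x = -1) →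
      ∀ ε : ℤ, (ε = 1 ∨ ε = -1) →
      ∀ p : ℕ, ∀ Θs : Fin p → Finset Site, ∀ γu : Fin p → Finset DBond,
      ∀ Θt : Fin p → Finset Site,
      (∀ j, IsEContour l σ ε (Θs j)) → Function.Injective Θs →
      (∀ j, NonCrossing l (contourOf (Θs j))) →
      (∀ j, UnderlineData l (Θs j) (γu j) (Θt j)) →
      ∀ c : ℝ, 0 ≤ c →
      ∀ I : Finset Site, IsBdryInterval l I →
      (∀ j, (↑(Vex l (gammaBar l (Θt j))) : Set Site) ⊆ (↑I : Set Site)) →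
      δ * l ≤ (I.card : ℝ) → (I.card : ℝ) ≤ (∑ j, ((γu j).card : ℝ)) + c →
      (1/2 : ℝ) * dH l ω (List.ofFn Θs) σ ≥
        ε₀ * max (l : ℝ) (∑ j, ((contourOf (Θs j)).card : ℝ)) - c := by
  refine ⟨(1 - δ) / 2 * min δ (1 / 2), mul_pos (by linarith) (lt_min hδ0 (by norm_num)), ?_⟩
  intro l ω hω hmix σ hσ ε hε p Θs γu Θt hΘs hinj _ hud c hc I hI hVex hIl hIu
  set X := ∑ j, (crossCount l (Θs j) : ℝ)
  set W := Finset.univ.biUnion fun j => extNbrs l (Θs j)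
  have hWI : W ⊆ I := Finset.biUnion_subset.2 fun j _ => by
    obtain ⟨-, -, -, hΘΘt, hΘt, -⟩ := hud j
    exact fun y hy => hVex j (extNbrs_subset_Vex hΘΘt hΘt hy)
  have hfield := two_mul_abs_sum_le_of_subset hWI (fun y hy => hω y (hI.1 hy)) (hmix I hI hIl)
  have hεfield : (ε : ℝ) * ∑ y ∈ W, ω y ≤ |∑ y ∈ W, ω y| := by
    rcases hε with rfl | rfl <;> simp [le_abs_self, neg_le_abs]
  have hγu : ∑ j, ((γu j).card : ℝ) ≤ X := Finset.sum_le_sum fun j _ => by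
    exact_mod_cast card_le_crossCount (hΘs j).subset_lamBox (hud j).1
  have hcontour := sum_card_contourOf_le hΘs hinj
  have hWcard : (W.card : ℝ) ≤ I.card := by exact_mod_cast Finset.card_le_card hWI
  have hIX : (I.card : ℝ) ≤ X + c := by linarith
  have hmax := min_mul_max_le (Nat.cast_nonneg l)
    (Finset.sum_nonneg fun j _ => Nat.cast_nonneg _) (by linarith : δ * l ≤ X + c)
    (by linarith : ∑ j, ((contourOf (Θs j)).card : ℝ) ≤ 2 * (X + c))
  rw [half_dH_ofFn hΘs hinj hσ hε ω]
  linarith [mul_le_mul_of_nonneg_left hmax (by linarith : (0 : ℝ) ≤ (1 - δ) / 2),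
    mul_le_mul_of_nonneg_left hIX (by linarith : (0 : ℝ) ≤ 1 + δ)]
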